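/- Let r ≥ 1 be an integer and let (α;β) = (α₁,…,α_{r+1};β₁,…,β_r) ∈ 𝒰_r be such that no β_i + 1 is a non-positive integer. Then for every integer k ≥ 1, (α₁)_k⋯(α_{r+1})_k/((β₁+1)_k⋯(β_r+1)_k · k!) = (α₁+1)_k⋯(α_{r+1}+1)_k/((β₁+1)_k⋯(β_r+1)_k · k!) − (α₁+1)_{k−1}⋯(α_{r+1}+1)_{k−1}/((β₁+1)_{k−1}⋯(β_r+1)_{k−1} · (k−1)!). -/

import Mathlib

/-!
Comparing coefficients of `x` in Vieta's formulas, the conditions defining `𝒰_r` say exactly that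
`∏ (αᵢ + x) = ∏ αᵢ + x ∏ (βᵢ + x)`. At `x = k`, after splitting off the last factor of each
Pochhammer symbol and the first factor of `(αᵢ)_k`, this polynomial identity is the claimed one
multiplied through by the (nonzero) common denominator.
-/

noncomputable def poch (a : ℂ) (k : ℕ) : ℂ := Polynomial.eval a (ascPochhammer ℂ k)

noncomputable def esym {n : ℕ} (v : Fin n → ℂ) (l : ℕ) : ℂ :=
  ∑ t ∈ Finset.powersetCard l (Finset.univ : Finset (Fin n)), ∏ i ∈ t, v i

def inU (r : ℕ) (α : Fin (r+1) → ℂ) (β : Fin r → ℂ) : Prop :=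
  ∀ l : ℕ, 1 ≤ l → l ≤ r → esym α l = esym β l

open Finset

theorem poch_succ_left (a : ℂ) (n : ℕ) : poch a (n + 1) = a * poch (a + 1) n := by
  simp [poch, ascPochhammer_succ_left, Polynomial.eval_comp]

theorem poch_succ_right (a : ℂ) (n : ℕ) : poch a (n + 1) = poch a n * (a + n) :=
  ascPochhammer_succ_eval n a

theorem poch_ne_zero {a : ℂ} (ha : ∀ m : ℕ, a ≠ -m) (k : ℕ) : poch a k ≠ 0 := by
  rw [poch, Ne, ascPochhammer_eval_eq_zero_iff]
  rintro ⟨m, -, hm⟩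
  exact ha m (by rw [hm, neg_neg])

theorem prod_poch_succ_right {ι : Type*} [Fintype ι] (a : ι → ℂ) (n : ℕ) :
    ∏ i, poch (a i) (n + 1) = (∏ i, poch (a i) n) * ∏ i, (a i + n) := by
  simp only [poch_succ_right, prod_mul_distrib]

theorem esym_eq_esymm {n : ℕ} (v : Fin n → ℂ) (l : ℕ) :
    esym v l = (univ.val.map v).esymm l :=
  (esymm_map_val v univ l).symm

theorem esym_zero {n : ℕ} (v : Fin n → ℂ) : esym v 0 = 1 := by
  simp [esym]

theorem esym_self {n : ℕ} (v : Fin n → ℂ) : esym v n = ∏ i, v i := by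
  have h := powersetCard_self (univ : Finset (Fin n))
  rw [card_univ, Fintype.card_fin] at h
  rw [esym, h, sum_singleton]

theorem prod_add_eq_sum_esym {n : ℕ} (v : Fin n → ℂ) (x : ℂ) :
    ∏ i, (v i + x) = ∑ l ∈ range (n + 1), esym v l * x ^ (n - l) := by
  have h := congrArg (Polynomial.eval x) (Multiset.prod_X_add_C_eq_sum_esymm (univ.val.map v))
  rw [Multiset.map_map, ← prod_eq_multiset_prod, Multiset.card_map, card_val, card_univ,
    Fintype.card_fin] at h
  simp only [Polynomial.eval_prod, Polynomial.eval_finsetSum, Function.comp_apply,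
    Polynomial.eval_add, Polynomial.eval_X, Polynomial.eval_C, Polynomial.eval_mul,
    Polynomial.eval_pow] at h
  simp only [esym_eq_esymm, add_comm (v _), h]

theorem inU.prod_add {r : ℕ} {α : Fin (r + 1) → ℂ} {β : Fin r → ℂ} (hU : inU r α β) (x : ℂ) :
    ∏ i, (α i + x) = ∏ i, α i + x * ∏ i, (β i + x) := by
  rw [prod_add_eq_sum_esym α, prod_add_eq_sum_esym β, sum_range_succ, esym_self, Nat.sub_self,
    pow_zero, mul_one, mul_sum, add_comm]
  congr 1
  refine sum_congr rfl fun l hl => ?_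
  have hlr : l ≤ r := Nat.lt_succ_iff.mp (mem_range.mp hl)
  have hesym : esym α l = esym β l := by
    rcases Nat.eq_zero_or_pos l with rfl | hl0
    · simp only [esym_zero]
    · exact hU l hl0 hlr
  rw [hesym, Nat.sub_add_comm hlr, pow_succ]
  ring

theorem termwise_identity_general
    (r : ℕ) (α : Fin (r+1) → ℂ) (β : Fin r → ℂ)
    (hU : inU r α β)
    (hβ : ∀ i : Fin r, ∀ m : ℕ, β i + 1 ≠ -(m : ℂ))
    (k : ℕ) (hk : 1 ≤ k) :
    (∏ i, poch (α i) k) / ((∏ i, poch (β i + 1) k) * (k.factorial : ℂ))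
      = (∏ i, poch (α i + 1) k) / ((∏ i, poch (β i + 1) k) * (k.factorial : ℂ))
        - (∏ i, poch (α i + 1) (k-1)) / ((∏ i, poch (β i + 1) (k-1)) * ((k-1).factorial : ℂ)) := by
  obtain ⟨n, rfl⟩ := Nat.exists_eq_add_of_le' hk
  have hB : ∏ i, poch (β i + 1) n ≠ 0 := prod_ne_zero_iff.mpr fun i _ => poch_ne_zero (hβ i) n
  have hQ : ∏ i, (β i + 1 + n) ≠ 0 :=
    prod_ne_zero_iff.mpr fun i _ h => hβ i n (eq_neg_of_add_eq_zero_left h)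
  have hkey := hU.prod_add (1 + n)
  simp only [← add_assoc] at hkey
  have hα : ∏ i, poch (α i) (n + 1) = (∏ i, α i) * ∏ i, poch (α i + 1) n := by
    simp only [poch_succ_left, prod_mul_distrib]
  rw [Nat.add_sub_cancel, hα, prod_poch_succ_right, prod_poch_succ_right, hkey, Nat.factorial_succ,
    Nat.cast_mul]
  field_simp
  push_cast
  ring

/-- The term-by-term identity used in the proof of the generalized Euler transformation. -/
theorem termwise_identity
    (r : ℕ) (hr : 1 ≤ r) (α : Fin (r+1) → ℂ) (β : Fin r → ℂ)
    (hU : inU r α β)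
    (hβ : ∀ i : Fin r, ∀ m : ℕ, β i + 1 ≠ -(m : ℂ))
    (k : ℕ) (hk : 1 ≤ k) :
    (∏ i, poch (α i) k) / ((∏ i, poch (β i + 1) k) * (k.factorial : ℂ))
      = (∏ i, poch (α i + 1) k) / ((∏ i, poch (β i + 1) k) * (k.factorial : ℂ))
        - (∏ i, poch (α i + 1) (k-1)) / ((∏ i, poch (β i + 1) (k-1)) * ((k-1).factorial : ℂ)) :=
  termwise_identity_general r α β hU hβ k hk
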